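/- arXiv:1603.05264 — 6 statements merged into one kernel-verified Lean document; each statement's English description precedes it below -/
import Mathlib

section
/- Let $x_1, x_2, x_3$ be real numbers with $x_1 + x_2 + x_3 = 3$ and $x_i > 0$ for each $i$. Then $2(x_1^3 + x_2^3 + x_3^3) - 5(x_1^2 + x_2^2 + x_3^2) + 9 \geq 0$. -/
private lemma schur_aux (a b c : ℝ) (hab : a ≤ b) (hbc : b ≤ c)
    (hsum : a + b + c = 3) (ha : 0 < a) (hb : 0 < b) (hc : 0 < c) :
    0 ≤ 2 * (a^3 + b^3 + c^3) - 5 * (a^2 + b^2 + c^2) + 9 := by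
  nlinarith [mul_nonneg (mul_nonneg ha.le (sub_nonneg.2 hab)) (sub_nonneg.2 (hab.trans hbc)),
    mul_nonneg (mul_nonneg hc.le (sub_nonneg.2 hbc)) (sub_nonneg.2 (hab.trans hbc)),
    mul_nonneg hb.le (sq_nonneg (a - c)), sq_nonneg (a - b), sq_nonneg (b - c), sq_nonneg (a - c)]

theorem stmt_0 (x₁ x₂ x₃ : ℝ) (hsum : x₁ + x₂ + x₃ = 3)
    (h₁ : 0 < x₁) (h₂ : 0 < x₂) (h₃ : 0 < x₃) :
    0 ≤ 2 * (x₁^3 + x₂^3 + x₃^3) - 5 * (x₁^2 + x₂^2 + x₃^2) + 9 := by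
  rcases le_total x₁ x₂ with h12 | h12 <;> rcases le_total x₂ x₃ with h23 | h23 <;>
    rcases le_total x₁ x₃ with h13 | h13 <;>
  · first
    | (have := schur_aux x₁ x₂ x₃ (by linarith) (by linarith) (by linarith) h₁ h₂ h₃; linarith)
    | (have := schur_aux x₁ x₃ x₂ (by linarith) (by linarith) (by linarith) h₁ h₃ h₂; linarith)
    | (have := schur_aux x₂ x₁ x₃ (by linarith) (by linarith) (by linarith) h₂ h₁ h₃; linarith)
    | (have := schur_aux x₂ x₃ x₁ (by linarith) (by linarith) (by linarith) h₂ h₃ h₁; linarith)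
    | (have := schur_aux x₃ x₁ x₂ (by linarith) (by linarith) (by linarith) h₃ h₁ h₂; linarith)
    | (have := schur_aux x₃ x₂ x₁ (by linarith) (by linarith) (by linarith) h₃ h₂ h₁; linarith)
end

section
/- Let $a_1, a_2, a_3$ be real numbers with $a_1 + a_2 + a_3 = 0$, and let $S > 0$ be such that $\frac{S}{6} + a_i + a_j > 0$ for all $i \neq j$. Then $S(a_1^2 + a_2^2 + a_3^2) - 12(a_1^3 + a_2^3 + a_3^3) \geq 0$. -/
lemma aux_max (a b c s : ℝ) (h : a + b + c = 0) (hs : 0 < s) (hc : c < s)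
    (ha : a ≤ c) (hb : b ≤ c) : 6 * (a * b * c) ≤ s * (a^2 + b^2 + c^2) := by
  have hc0 : 0 ≤ c := by linarith
  have hc' : c = -a - b := by linarith
  subst hc'
  nlinarith [mul_nonneg (mul_nonneg hc0 hc0) (le_of_lt (sub_pos.mpr hc)),
    mul_nonneg (by linarith : (0:ℝ) ≤ s + 3*(-a-b)) (sq_nonneg (a - b))]

theorem stmt_1 (a₁ a₂ a₃ S : ℝ) (hsum : a₁ + a₂ + a₃ = 0) (hS : 0 < S)
    (h12 : 0 < S / 6 + a₁ + a₂) (h13 : 0 < S / 6 + a₁ + a₃) (h23 : 0 < S / 6 + a₂ + a₃) :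
    0 ≤ S * (a₁^2 + a₂^2 + a₃^2) - 12 * (a₁^3 + a₂^3 + a₃^3) := by
  have hcube : a₁^3 + a₂^3 + a₃^3 = 3 * (a₁ * a₂ * a₃) := by
    linear_combination (a₁^2 + a₂^2 + a₃^2 - a₁*a₂ - a₁*a₃ - a₂*a₃) * hsum
  rcases le_total a₁ a₂ with h1 | h1
  · rcases le_total a₂ a₃ with h2 | h2
    · have := aux_max a₁ a₂ a₃ (S/6) (by linarith) (by linarith) (by linarith) (by linarith) (by linarith)
      nlinarith
    · rcases le_total a₁ a₃ with h3 | h3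
      · have := aux_max a₁ a₃ a₂ (S/6) (by linarith) (by linarith) (by linarith) (by linarith) (by linarith)
        nlinarith
      · have := aux_max a₁ a₃ a₂ (S/6) (by linarith) (by linarith) (by linarith) (by linarith) (by linarith)
        nlinarith
  · rcases le_total a₁ a₃ with h2 | h2
    · have := aux_max a₂ a₁ a₃ (S/6) (by linarith) (by linarith) (by linarith) (by linarith) (by linarith)
      nlinarith
    · rcases le_total a₂ a₃ with h3 | h3
      · have := aux_max a₂ a₃ a₁ (S/6) (by linarith) (by linarith) (by linarith) (by linarith) (by linarith)
        nlinarith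
      · have := aux_max a₃ a₂ a₁ (S/6) (by linarith) (by linarith) (by linarith) (by linarith) (by linarith)
        nlinarith
end

section
/- Let $a_1, a_2, a_3$ be real numbers with $a_1 + a_2 + a_3 = 0$ and $a_1^2 + a_2^2 + a_3^2 = 1$. Then $a_1^3 + a_2^3 + a_3^3 \leq \frac{1}{\sqrt{6}}$. -/
theorem stmt_3 (a₁ a₂ a₃ : ℝ) (hsum : a₁ + a₂ + a₃ = 0)
    (hnorm : a₁^2 + a₂^2 + a₃^2 = 1) :
    a₁^3 + a₂^3 + a₃^3 ≤ 1 / Real.sqrt 6 := by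
  have h6 : (1 : ℝ) / Real.sqrt 6 = Real.sqrt (1/6) := by
    rw [Real.sqrt_div' 1 (by norm_num), Real.sqrt_one, one_div]
  have hsq : (a₁^3 + a₂^3 + a₃^3)^2 ≤ 1/6 := by
    have ha3 : a₃ = -(a₁ + a₂) := by linarith
    subst ha3
    nlinarith [mul_nonneg (sq_nonneg (a₁ - a₂)) (sq_nonneg (3*a₁*a₂ + 1)),
      sq_nonneg (a₁ - a₂), sq_nonneg (a₁ + a₂)]
  calc a₁^3 + a₂^3 + a₃^3 ≤ |a₁^3 + a₂^3 + a₃^3| := le_abs_self _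
    _ = Real.sqrt ((a₁^3 + a₂^3 + a₃^3)^2) := (Real.sqrt_sq_eq_abs _).symm
    _ ≤ Real.sqrt (1/6) := Real.sqrt_le_sqrt hsq
    _ = 1 / Real.sqrt 6 := h6.symm
end

section
/- Let $a_1, a_2, a_3, c_1, c_2, c_3$ be real numbers with $a_1+a_2+a_3 = 0 = c_1+c_2+c_3$, let $S > 0$, $b \geq 0$, and suppose $\frac{S}{6} + a_i + a_j > 0$ and $\frac{S}{6} + c_i + c_j > 0$ for all $i \neq j$. Then $-S^2(\sum a_i^2 + \sum c_i^2) + 12S(\sum a_i^3 + \sum c_i^3) - 2b^2(S + 12b)^2 - 48 b^2 (\sum a_i^2 + \sum c_i^2) \leq 0$. -/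
theorem schur_aux_s8 (p q r : ℝ) (hp : 0 ≤ p) (hq : 0 ≤ q) (hr : 0 ≤ r) :
    0 ≤ p*(p-q)*(p-r) + q*(q-p)*(q-r) + r*(r-p)*(r-q) := by
  rcases le_total p q with h1 | h1 <;> rcases le_total q r with h2 | h2 <;>
    rcases le_total p r with h3 | h3 <;>
    nlinarith [mul_nonneg hp (sq_nonneg (p-q)), mul_nonneg hq (sq_nonneg (q-r)),
      mul_nonneg hr (sq_nonneg (p-r)), mul_nonneg hp (sq_nonneg (p-r)),
      mul_nonneg hq (sq_nonneg (p-q)), mul_nonneg hr (sq_nonneg (q-r)),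
      mul_nonneg (mul_nonneg hp hq) hr]

theorem key_aux (a₁ a₂ a₃ S : ℝ) (hasum : a₁ + a₂ + a₃ = 0) (hS : 0 < S)
    (h1 : 0 < S / 6 + a₁ + a₂) (h2 : 0 < S / 6 + a₁ + a₃) (h3 : 0 < S / 6 + a₂ + a₃) :
    12 * (a₁^3 + a₂^3 + a₃^3) ≤ S * (a₁^2 + a₂^2 + a₃^2) := by
  have := schur_aux_s8 (S/6 - a₁) (S/6 - a₂) (S/6 - a₃) (by linarith) (by linarith) (by linarith)
  have ha3 : a₃ = -a₁ - a₂ := by linarith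
  subst ha3
  nlinarith [this]

theorem stmt_8 (a₁ a₂ a₃ c₁ c₂ c₃ S b : ℝ)
    (hasum : a₁ + a₂ + a₃ = 0) (hcsum : c₁ + c₂ + c₃ = 0)
    (hS : 0 < S) (hb : 0 ≤ b)
    (ha12 : 0 < S / 6 + a₁ + a₂) (ha13 : 0 < S / 6 + a₁ + a₃) (ha23 : 0 < S / 6 + a₂ + a₃)
    (hc12 : 0 < S / 6 + c₁ + c₂) (hc13 : 0 < S / 6 + c₁ + c₃) (hc23 : 0 < S / 6 + c₂ + c₃) :
    -S^2 * ((a₁^2 + a₂^2 + a₃^2) + (c₁^2 + c₂^2 + c₃^2))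
      + 12 * S * ((a₁^3 + a₂^3 + a₃^3) + (c₁^3 + c₂^3 + c₃^3))
      - 2 * b^2 * (S + 12 * b)^2
      - 48 * b^2 * ((a₁^2 + a₂^2 + a₃^2) + (c₁^2 + c₂^2 + c₃^2)) ≤ 0 := by
  have hka := key_aux a₁ a₂ a₃ S hasum hS ha12 ha13 ha23
  have hkc := key_aux c₁ c₂ c₃ S hcsum hS hc12 hc13 hc23
  have h1 : S * (12 * (a₁^3 + a₂^3 + a₃^3)) ≤ S * (S * (a₁^2 + a₂^2 + a₃^2)) :=
    mul_le_mul_of_nonneg_left hka hS.le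
  have h2 : S * (12 * (c₁^3 + c₂^3 + c₃^3)) ≤ S * (S * (c₁^2 + c₂^2 + c₃^2)) :=
    mul_le_mul_of_nonneg_left hkc hS.le
  nlinarith [sq_nonneg (S + 12*b), sq_nonneg b, sq_nonneg a₁, sq_nonneg a₂, sq_nonneg a₃,
    sq_nonneg c₁, sq_nonneg c₂, sq_nonneg c₃,
    mul_nonneg (sq_nonneg b) (sq_nonneg (S + 12*b)),
    mul_nonneg (sq_nonneg b) (sq_nonneg a₁), mul_nonneg (sq_nonneg b) (sq_nonneg a₂),
    mul_nonneg (sq_nonneg b) (sq_nonneg a₃), mul_nonneg (sq_nonneg b) (sq_nonneg c₁),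
    mul_nonneg (sq_nonneg b) (sq_nonneg c₂), mul_nonneg (sq_nonneg b) (sq_nonneg c₃)]
end

section
/- Let $B$ be a real $3 \times 3$ matrix with singular values $B_1 \leq B_2 \leq B_3$, and let $A_1 \leq A_2$, $C_1 \leq C_2$ be real numbers with $A_1 + A_2 > 0$ and $C_1 + C_2 > 0$. Define $E = \frac{4 B_1 (B_3 - B_2)}{B_3} + \frac{(A_1 - B_1)^2 + (A_2 - B_2)^2 + 2 A_2 (B_2 - B_1)}{A_1 + A_2} + \frac{(C_1 - B_1)^2 + (C_2 - B_2)^2 + 2 C_2 (C_2' := B_2 - B_1)}{C_1 + C_2}$ (with $B_3 > 0$ and $B_1 \geq 0$). Then $E \geq 0$, and $E = 0$ implies $A_1 = A_2 = C_1 = C_2 = B_1 = B_2 = B_3$. -/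
/-!
Each of the three summands is nonnegative: the first because `B₁ ≥ 0` and `B₂ ≤ B₃`, the other two
because their numerators are sums of squares plus `2 A₂ (B₂ - B₁) ≥ 0` (note `A₂ > 0` since
`A₁ ≤ A₂` and `A₁ + A₂ > 0`). So `E = 0` forces every summand to vanish. A vanishing second summand
gives `A₁ = B₁`, `A₂ = B₂` and, as `A₂ > 0`, `B₁ = B₂`; likewise for `C`. Then `B₁ = A₁ = A₂ > 0`,
and the first summand vanishing gives `B₂ = B₃`.
-/

noncomputable def pairDefect (a₁ a₂ b₁ b₂ : ℝ) : ℝ :=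
  ((a₁ - b₁) ^ 2 + (a₂ - b₂) ^ 2 + 2 * a₂ * (b₂ - b₁)) / (a₁ + a₂)

lemma pairDefect_nonneg {a₁ a₂ b₁ b₂ : ℝ} (ha₂ : 0 ≤ a₂) (ha : 0 ≤ a₁ + a₂) (hb : b₁ ≤ b₂) :
    0 ≤ pairDefect a₁ a₂ b₁ b₂ := by
  have hmix : 0 ≤ 2 * a₂ * (b₂ - b₁) := by nlinarith
  exact div_nonneg (by positivity) ha

lemma eq_of_pairDefect_eq_zero {a₁ a₂ b₁ b₂ : ℝ} (ha₂ : 0 < a₂) (ha : 0 < a₁ + a₂) (hb : b₁ ≤ b₂)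
    (h : pairDefect a₁ a₂ b₁ b₂ = 0) : a₁ = b₁ ∧ a₂ = b₂ ∧ b₁ = b₂ := by
  have hnum : (a₁ - b₁) ^ 2 + (a₂ - b₂) ^ 2 + 2 * a₂ * (b₂ - b₁) = 0 := by
    simpa [pairDefect, ha.ne'] using h
  have hmix : 0 ≤ 2 * a₂ * (b₂ - b₁) := by nlinarith
  have h₁ : (a₁ - b₁) ^ 2 = 0 := by nlinarith [sq_nonneg (a₂ - b₂)]
  have h₂ : (a₂ - b₂) ^ 2 = 0 := by nlinarith [sq_nonneg (a₁ - b₁)]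
  have h₃ : a₂ * (b₂ - b₁) = 0 := by nlinarith [sq_nonneg (a₁ - b₁)]
  refine ⟨by simpa [sub_eq_zero] using h₁, by simpa [sub_eq_zero] using h₂, ?_⟩
  simpa [ha₂.ne', sub_eq_zero, eq_comm] using h₃

theorem stmt_9_general (B₁ B₂ B₃ A₁ A₂ C₁ C₂ : ℝ)
    (hB1 : 0 ≤ B₁) (hB12 : B₁ ≤ B₂) (hB23 : B₂ ≤ B₃)
    (hA : A₁ ≤ A₂) (hC : C₁ ≤ C₂) (hApos : 0 < A₁ + A₂) (hCpos : 0 < C₁ + C₂) :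
    0 ≤ 4 * B₁ * (B₃ - B₂) / B₃
        + ((A₁ - B₁)^2 + (A₂ - B₂)^2 + 2 * A₂ * (B₂ - B₁)) / (A₁ + A₂)
        + ((C₁ - B₁)^2 + (C₂ - B₂)^2 + 2 * C₂ * (B₂ - B₁)) / (C₁ + C₂) ∧
      (4 * B₁ * (B₃ - B₂) / B₃
        + ((A₁ - B₁)^2 + (A₂ - B₂)^2 + 2 * A₂ * (B₂ - B₁)) / (A₁ + A₂)
        + ((C₁ - B₁)^2 + (C₂ - B₂)^2 + 2 * C₂ * (B₂ - B₁)) / (C₁ + C₂) = 0 →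
        A₁ = A₂ ∧ A₂ = C₁ ∧ C₁ = C₂ ∧ C₂ = B₁ ∧ B₁ = B₂ ∧ B₂ = B₃) := by
  have hA₂ : 0 < A₂ := by linarith
  have hC₂ : 0 < C₂ := by linarith
  have hT : 0 ≤ 4 * B₁ * (B₃ - B₂) / B₃ :=
    div_nonneg (by have := sub_nonneg.2 hB23; positivity) (by linarith)
  have hTA := pairDefect_nonneg (a₁ := A₁) hA₂.le hApos.le hB12
  have hTC := pairDefect_nonneg (a₁ := C₁) hC₂.le hCpos.le hB12
  change 0 ≤ _ + pairDefect A₁ A₂ B₁ B₂ + pairDefect C₁ C₂ B₁ B₂ ∧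
    (_ + pairDefect A₁ A₂ B₁ B₂ + pairDefect C₁ C₂ B₁ B₂ = 0 → _)
  refine ⟨by positivity, fun hE => ?_⟩
  obtain ⟨hTA0, hTC0⟩ := (add_eq_zero_iff_of_nonneg (add_nonneg hT hTA) hTC).1 hE
  obtain ⟨hT0, hTA0⟩ := (add_eq_zero_iff_of_nonneg hT hTA).1 hTA0
  obtain ⟨hAB₁, hAB₂, hB₁₂⟩ := eq_of_pairDefect_eq_zero hA₂ hApos hB12 hTA0
  obtain ⟨hCB₁, hCB₂, -⟩ := eq_of_pairDefect_eq_zero hC₂ hCpos hB12 hTC0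
  have hB₁ : 0 < B₁ := by linarith
  have hB₂₃ : B₃ - B₂ = 0 := by
    have hB₃ : B₃ ≠ 0 := by linarith
    simpa [hB₁.ne', hB₃] using hT0
  refine ⟨?_, ?_, ?_, ?_, hB₁₂, ?_⟩ <;> linarith

theorem stmt_9 (B₁ B₂ B₃ A₁ A₂ C₁ C₂ : ℝ)
    (hB1 : 0 ≤ B₁) (hB12 : B₁ ≤ B₂) (hB23 : B₂ ≤ B₃) (hB3 : 0 < B₃)
    (hA : A₁ ≤ A₂) (hC : C₁ ≤ C₂) (hApos : 0 < A₁ + A₂) (hCpos : 0 < C₁ + C₂) :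
    0 ≤ 4 * B₁ * (B₃ - B₂) / B₃
        + ((A₁ - B₁)^2 + (A₂ - B₂)^2 + 2 * A₂ * (B₂ - B₁)) / (A₁ + A₂)
        + ((C₁ - B₁)^2 + (C₂ - B₂)^2 + 2 * C₂ * (B₂ - B₁)) / (C₁ + C₂) ∧
      (4 * B₁ * (B₃ - B₂) / B₃
        + ((A₁ - B₁)^2 + (A₂ - B₂)^2 + 2 * A₂ * (B₂ - B₁)) / (A₁ + A₂)
        + ((C₁ - B₁)^2 + (C₂ - B₂)^2 + 2 * C₂ * (B₂ - B₁)) / (C₁ + C₂) = 0 →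
        A₁ = A₂ ∧ A₂ = C₁ ∧ C₁ = C₂ ∧ C₂ = B₁ ∧ B₁ = B₂ ∧ B₂ = B₃) :=
  stmt_9_general B₁ B₂ B₃ A₁ A₂ C₁ C₂ hB1 hB12 hB23 hA hC hApos hCpos
end

section
/- For real numbers $\lambda_1, \lambda_2, \lambda_3, \lambda_4$ with $\lambda_1 + \lambda_2 + \lambda_3 + \lambda_4 = 0$, one has $\lambda_1^3 + \lambda_2^3 + \lambda_3^3 + \lambda_4^3 \leq \frac{1}{\sqrt{3}} \left( \lambda_1^2 + \lambda_2^2 + \lambda_3^2 + \lambda_4^2 \right)^{3/2}$. -/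
lemma cube_bound (u s x : ℝ) (hu2 : u^2 = 3*s^2) (hx : x ≤ u/2) :
    x^3 ≤ u/6*x^2 + 5*s^2/12*x + u*s^2/24 := by
  have hu3 : u^3 = 3*s^2*u := by rw [pow_succ, hu2]
  have hul : u^2*x = 3*s^2*x := by rw [hu2]
  nlinarith [mul_nonneg (sub_nonneg.2 hx) (sq_nonneg (x + u/6)), hu3, hul]

theorem stmt_12 (l₁ l₂ l₃ l₄ : ℝ) (hsum : l₁ + l₂ + l₃ + l₄ = 0) :
    l₁^3 + l₂^3 + l₃^3 + l₄^3 ≤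
      (1 / Real.sqrt 3) * (l₁^2 + l₂^2 + l₃^2 + l₄^2) ^ ((3:ℝ)/2) := by
  set S := l₁^2 + l₂^2 + l₃^2 + l₄^2 with hSdef
  have hS0 : 0 ≤ S := by positivity
  set s := Real.sqrt S with hsdef
  have hs0 : 0 ≤ s := Real.sqrt_nonneg _
  have hS : S = s^2 := (Real.sq_sqrt hS0).symm
  set r := Real.sqrt 3 with hrdef
  have hr0 : 0 < r := Real.sqrt_pos.2 (by norm_num)
  have hr2 : r^2 = 3 := Real.sq_sqrt (by norm_num)
  set u := r * s with hudef
  have hu0 : 0 ≤ u := mul_nonneg hr0.le hs0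
  have hu2 : u^2 = 3*s^2 := by rw [hudef, mul_pow, hr2]
  have hb : ∀ x y z w : ℝ, x + y + z + w = 0 → x^2+y^2+z^2+w^2 = S → x ≤ u/2 := by
    intro x y z w h1 h2
    nlinarith [sq_nonneg (y-z), sq_nonneg (y-w), sq_nonneg (z-w), hu0, hu2, hS]
  have h1 := cube_bound u s l₁ hu2 (hb l₁ l₂ l₃ l₄ hsum rfl)
  have h2 := cube_bound u s l₂ hu2 (hb l₂ l₁ l₃ l₄ (by linarith) (by rw [hSdef]; ring))
  have h3 := cube_bound u s l₃ hu2 (hb l₃ l₁ l₂ l₄ (by linarith) (by rw [hSdef]; ring))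
  have h4 := cube_bound u s l₄ hu2 (hb l₄ l₁ l₂ l₃ (by linarith) (by rw [hSdef]; ring))
  have hE : u/6*(l₁^2+l₂^2+l₃^2+l₄^2) = u*s^2/6 := by rw [← hSdef, hS]; ring
  have hE2 : 5*s^2/12*(l₁+l₂+l₃+l₄) = 0 := by rw [hsum]; ring
  have hmain : l₁^3 + l₂^3 + l₃^3 + l₄^3 ≤ u*s^2/3 := by linarith
  have hrpow : S ^ ((3:ℝ)/2) = s^3 := by
    rw [hS, ← Real.rpow_natCast s 2, ← Real.rpow_mul hs0, ← Real.rpow_natCast s 3]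
    norm_num
  rw [hrpow]
  have : (1/r) * s^3 = u*s^2/3 := by
    rw [hudef]
    field_simp
    linear_combination (-(s^3)) * hr2
  rw [this]
  exact hmain
end
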